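/- (Blindness of score matching to isolated components in the model.) Fix μ₁ ∈ ℝ, σ > 0 and π ∈ (0,1). Let q(x) = φ_{μ₁,σ}(x) be a single Gaussian and p_{μ₂}(x) = π φ_{μ₁,σ}(x) + (1−π) φ_{μ₂,σ}(x) a mixture containing an additional component. Then the Fisher divergence J(q ‖ p_{μ₂}) → 0 as μ₂ → +∞, regardless of the mixing proportion π. -/

import Mathlib

open MeasureTheory Filter

/-- Gaussian density with mean `μ` and standard deviation `σ`. -/
noncomputable def gaussian (μ σ : ℝ) (x : ℝ) : ℝ :=
  (σ * Real.sqrt (2 * Real.pi))⁻¹ * Real.exp (-(x - μ) ^ 2 / (2 * σ ^ 2))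

/-- The score of a density `ρ`: the derivative of its log. -/
noncomputable def score (ρ : ℝ → ℝ) (x : ℝ) : ℝ :=
  deriv (fun y => Real.log (ρ y)) x

/-- Fisher divergence between densities `q` and `p`. -/
noncomputable def fisherDiv (q p : ℝ → ℝ) : ℝ :=
  ∫ x : ℝ, q x * (score q x - score p x) ^ 2

/-! The excess score `s_q - s_p` equals `(μ₁ - μ₂) / σ²` times the posterior weight
`r = (1 - w) φ₂ / p ∈ [0, 1]` of the extra component. Since `r ≤ 1` and `r ≤ (1 - w) φ₂ / (w φ₁)`,
`φ₁ r² ≤ √((1 - w) / w) √(φ₁ φ₂)`, and `∫ √(φ₁ φ₂)` is the Bhattacharyya coefficient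
`exp (-(μ₂ - μ₁)² / (8σ²))`. Hence `J(q ‖ p) ≤ C (μ₂ - μ₁)² exp (-(μ₂ - μ₁)² / (8σ²)) → 0`. -/

open Real

lemma gaussian_pos (μ : ℝ) {σ : ℝ} (hσ : 0 < σ) (x : ℝ) : 0 < gaussian μ σ x := by
  unfold gaussian
  have := pi_pos
  positivity

lemma gaussian_eq_gaussianPDFReal (μ : ℝ) {σ : ℝ} (hσ : 0 < σ) :
    gaussian μ σ = ProbabilityTheory.gaussianPDFReal μ (σ ^ 2).toNNReal := by
  funext x
  have hsqrt : √(2 * π * σ ^ 2) = σ * √(2 * π) := by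
    rw [mul_comm (2 * π), sqrt_mul (sq_nonneg σ), sqrt_sq hσ.le]
  rw [ProbabilityTheory.gaussianPDFReal_def, Real.coe_toNNReal _ (sq_nonneg σ), hsqrt, gaussian]

lemma integral_gaussian_eq_one (μ : ℝ) {σ : ℝ} (hσ : 0 < σ) : ∫ x, gaussian μ σ x = 1 := by
  rw [gaussian_eq_gaussianPDFReal μ hσ]
  exact ProbabilityTheory.integral_gaussianPDFReal_eq_one μ (by simpa using hσ.ne')

lemma hasDerivAt_gaussian (μ σ x : ℝ) :
    HasDerivAt (gaussian μ σ) (gaussian μ σ x * (-(x - μ) / σ ^ 2)) x := by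
  have hexponent : HasDerivAt (fun y => -(y - μ) ^ 2 / (2 * σ ^ 2)) (-(x - μ) / σ ^ 2) x := by
    refine ((((hasDerivAt_id x).sub_const μ).fun_pow 2).neg.div_const (2 * σ ^ 2)).congr_deriv ?_
    simp only [id]
    field_simp
    ring
  refine (hexponent.exp.const_mul (σ * √(2 * π))⁻¹).congr_deriv ?_
  rw [gaussian, mul_assoc]

lemma score_eq_of_hasDerivAt {f : ℝ → ℝ} {f' x : ℝ} (hf : HasDerivAt f f' x) (hx : f x ≠ 0) :
    score f x = f' / f x :=
  (hf.log hx).deriv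

lemma score_gaussian (μ : ℝ) {σ : ℝ} (hσ : 0 < σ) (x : ℝ) :
    score (gaussian μ σ) x = -(x - μ) / σ ^ 2 := by
  rw [score_eq_of_hasDerivAt (hasDerivAt_gaussian μ σ x) (gaussian_pos μ hσ x).ne',
    mul_div_cancel_left₀ _ (gaussian_pos μ hσ x).ne']

lemma score_gaussian_sub_score_mixture (μ₁ μ₂ : ℝ) {σ w : ℝ} (hσ : 0 < σ)
    (hw : w ∈ Set.Ioo (0 : ℝ) 1) (x : ℝ) :
    score (gaussian μ₁ σ) x -
        score (fun y => w * gaussian μ₁ σ y + (1 - w) * gaussian μ₂ σ y) x =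
      (μ₁ - μ₂) / σ ^ 2 * ((1 - w) * gaussian μ₂ σ x /
        (w * gaussian μ₁ σ x + (1 - w) * gaussian μ₂ σ x)) := by
  have hp : 0 < w * gaussian μ₁ σ x + (1 - w) * gaussian μ₂ σ x := by
    have := gaussian_pos μ₁ hσ x; have := gaussian_pos μ₂ hσ x
    have := hw.1; have := sub_pos.2 hw.2; positivity
  rw [score_gaussian μ₁ hσ x, score_eq_of_hasDerivAt
    (((hasDerivAt_gaussian μ₁ σ x).const_mul w).fun_add
      ((hasDerivAt_gaussian μ₂ σ x).const_mul (1 - w))) hp.ne']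
  field_simp
  ring

lemma mul_mixture_weight_sq_le {a b w : ℝ} (ha : 0 < a) (hb : 0 < b)
    (hw : w ∈ Set.Ioo (0 : ℝ) 1) :
    a * ((1 - w) * b / (w * a + (1 - w) * b)) ^ 2 ≤ √((1 - w) / w) * √(a * b) := by
  obtain ⟨hw₀, hw₁⟩ := hw
  have hp : 0 < w * a + (1 - w) * b := by have := sub_pos.2 hw₁; positivity
  set r := (1 - w) * b / (w * a + (1 - w) * b) with hr
  have hr₀ : 0 ≤ r := by have := sub_pos.2 hw₁; positivity
  have hr₁ : r ≤ 1 := by rw [hr, div_le_one hp]; nlinarith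
  have hwar : w * a * r ≤ (1 - w) * b := by
    calc w * a * r ≤ (w * a + (1 - w) * b) * r := by gcongr; nlinarith
      _ = (1 - w) * b := mul_div_cancel₀ _ hp.ne'
  rw [← sqrt_mul (div_nonneg (sub_pos.2 hw₁).le hw₀.le), le_sqrt (by positivity) (by positivity)]
  calc (a * r ^ 2) ^ 2 = a * (a * r ^ 4) := by ring
    _ ≤ a * (a * r) := by gcongr; exact pow_le_of_le_one hr₀ hr₁ (by norm_num)
    _ ≤ a * ((1 - w) * b / w) := by gcongr; rw [le_div_iff₀ hw₀]; linarith
    _ = (1 - w) / w * (a * b) := by ring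

lemma gaussian_mul_gaussian (μ₁ μ₂ σ x : ℝ) :
    gaussian μ₁ σ x * gaussian μ₂ σ x =
      (exp (-(μ₂ - μ₁) ^ 2 / (8 * σ ^ 2)) * gaussian ((μ₁ + μ₂) / 2) σ x) ^ 2 := by
  have hexponent : -(x - μ₁) ^ 2 / (2 * σ ^ 2) + -(x - μ₂) ^ 2 / (2 * σ ^ 2) =
      2 * (-(μ₂ - μ₁) ^ 2 / (8 * σ ^ 2) + -(x - (μ₁ + μ₂) / 2) ^ 2 / (2 * σ ^ 2)) := by
    field_simp
    ring
  simp only [gaussian, mul_pow, ← exp_nat_mul]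
  rw [mul_mul_mul_comm, ← exp_add, hexponent, mul_add, exp_add]
  push_cast
  ring

lemma integral_sqrt_gaussian_mul_gaussian (μ₁ μ₂ : ℝ) {σ : ℝ} (hσ : 0 < σ) :
    ∫ x, √(gaussian μ₁ σ x * gaussian μ₂ σ x) = exp (-(μ₂ - μ₁) ^ 2 / (8 * σ ^ 2)) := by
  simp_rw [gaussian_mul_gaussian, sqrt_sq (mul_pos (exp_pos _) (gaussian_pos _ hσ _)).le]
  rw [integral_const_mul, integral_gaussian_eq_one _ hσ, mul_one]

lemma integrable_sqrt_gaussian_mul_gaussian (μ₁ μ₂ : ℝ) {σ : ℝ} (hσ : 0 < σ) :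
    Integrable fun x => √(gaussian μ₁ σ x * gaussian μ₂ σ x) := by
  simp_rw [gaussian_mul_gaussian, sqrt_sq (mul_pos (exp_pos _) (gaussian_pos _ hσ _)).le,
    gaussian_eq_gaussianPDFReal _ hσ]
  exact (ProbabilityTheory.integrable_gaussianPDFReal _ _).const_mul _

lemma fisherDiv_nonneg {q : ℝ → ℝ} (hq : 0 ≤ q) (p : ℝ → ℝ) : 0 ≤ fisherDiv q p :=
  integral_nonneg fun x => mul_nonneg (hq x) (sq_nonneg _)

lemma fisherDiv_gaussian_mixture_le (μ₁ μ₂ : ℝ) {σ w : ℝ} (hσ : 0 < σ)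
    (hw : w ∈ Set.Ioo (0 : ℝ) 1) :
    fisherDiv (gaussian μ₁ σ) (fun y => w * gaussian μ₁ σ y + (1 - w) * gaussian μ₂ σ y) ≤
      √((1 - w) / w) / σ ^ 4 * ((μ₂ - μ₁) ^ 2 * exp (-(μ₂ - μ₁) ^ 2 / (8 * σ ^ 2))) := by
  have hpointwise : ∀ x, gaussian μ₁ σ x * (score (gaussian μ₁ σ) x -
      score (fun y => w * gaussian μ₁ σ y + (1 - w) * gaussian μ₂ σ y) x) ^ 2 ≤
      (μ₂ - μ₁) ^ 2 / σ ^ 4 * √((1 - w) / w) * √(gaussian μ₁ σ x * gaussian μ₂ σ x) := by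
    intro x
    rw [score_gaussian_sub_score_mixture μ₁ μ₂ hσ hw, mul_assoc _ (√_)]
    calc _ = (μ₂ - μ₁) ^ 2 / σ ^ 4 * (gaussian μ₁ σ x * ((1 - w) * gaussian μ₂ σ x /
          (w * gaussian μ₁ σ x + (1 - w) * gaussian μ₂ σ x)) ^ 2) := by ring
      _ ≤ _ := mul_le_mul_of_nonneg_left
          (mul_mixture_weight_sq_le (gaussian_pos μ₁ hσ x) (gaussian_pos μ₂ hσ x) hw)
          (by positivity)
  calc fisherDiv (gaussian μ₁ σ) _
      ≤ ∫ x, (μ₂ - μ₁) ^ 2 / σ ^ 4 * √((1 - w) / w) * √(gaussian μ₁ σ x * gaussian μ₂ σ x) :=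
        integral_mono_of_nonneg
          (ae_of_all _ fun x => mul_nonneg (gaussian_pos μ₁ hσ x).le (sq_nonneg _))
          ((integrable_sqrt_gaussian_mul_gaussian μ₁ μ₂ hσ).const_mul _) (ae_of_all _ hpointwise)
    _ = _ := by
        rw [integral_const_mul, integral_sqrt_gaussian_mul_gaussian μ₁ μ₂ hσ]
        ring

lemma tendsto_sq_mul_exp_neg_sq_div (m : ℝ) {c : ℝ} (hc : 0 < c) :
    Tendsto (fun t => (t - m) ^ 2 * exp (-(t - m) ^ 2 / c)) atTop (nhds 0) := by
  have hsq : Tendsto (fun t => (t - m) ^ 2 / c) atTop atTop :=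
    ((tendsto_pow_atTop two_ne_zero).comp
      (tendsto_atTop_add_const_right _ (-m) tendsto_id)).atTop_div_const hc
  have := ((tendsto_pow_mul_exp_neg_atTop_nhds_zero 1).comp hsq).const_mul c
  rw [mul_zero] at this
  refine this.congr fun t => ?_
  simp only [Function.comp, pow_one, neg_div]
  field_simp

/-- blindness of score matching to isolated components in the model,
separated components limit: `J(q ‖ p_{μ₂}) → 0` as `μ₂ → +∞`. -/
theorem fisher_blind_to_isolated_components_separation (μ₁ σ w : ℝ) (hσ : 0 < σ)
    (hw : w ∈ Set.Ioo (0 : ℝ) 1) :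
    Tendsto
      (fun μ₂ => fisherDiv (fun y => gaussian μ₁ σ y)
        (fun y => w * gaussian μ₁ σ y + (1 - w) * gaussian μ₂ σ y))
      atTop (nhds 0) := by
  have hlim := (tendsto_sq_mul_exp_neg_sq_div μ₁ (by positivity : 0 < 8 * σ ^ 2)).const_mul
    (√((1 - w) / w) / σ ^ 4)
  rw [mul_zero] at hlim
  exact squeeze_zero (fun _ => fisherDiv_nonneg (fun x => (gaussian_pos μ₁ hσ x).le) _)
    (fun μ₂ => fisherDiv_gaussian_mixture_le μ₁ μ₂ hσ hw) hlim
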